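/- Let X be a compact uniform space and f_{0,∞} a sequence of continuous self-maps of X. For every k ≥ 1, the k-fold product system f_{0,∞}^{(k)} = {f_n × ⋯ × f_n (k times)} on X^k satisfies h(f_{0,∞}^{(k)}) = k · h(f_{0,∞}). -/

import Mathlib

open Filter Set
open scoped Uniformity

/-- `itr f i n = f (i+n-1) ∘ ⋯ ∘ f i`, the composition of `n` maps of the sequence `f`
starting at index `i` (so `itr f i 0 = id`). -/
def itr {X : Type*} (f : ℕ → X → X) (i : ℕ) : ℕ → X → X
  | 0 => id
  | n + 1 => fun x => f (i + n) (itr f i n x)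

/-- `E` is an `(n,γ)`-separated set for the nonautonomous system `f`. -/
def IsSep {X : Type*} (f : ℕ → X → X) (n : ℕ) (γ : Set (X × X)) (E : Set X) : Prop :=
  ∀ x ∈ E, ∀ y ∈ E, x ≠ y → ∃ j < n, (itr f 0 j x, itr f 0 j y) ∉ γ

/-- `F` `(n,γ)`-spans the set `K` for the nonautonomous system `f`. -/
def Spans {X : Type*} (f : ℕ → X → X) (n : ℕ) (γ : Set (X × X)) (F K : Set X) : Prop :=
  ∀ x ∈ K, ∃ y ∈ F, ∀ j < n, (itr f 0 j x, itr f 0 j y) ∈ γ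

/-- Maximal cardinality of an `(n,γ)`-separated subset of `Λ`. -/
noncomputable def sepCard {X : Type*} (f : ℕ → X → X) (Λ : Set X) (n : ℕ)
    (γ : Set (X × X)) : ℕ :=
  sSup {m | ∃ E : Finset X, ↑E ⊆ Λ ∧ IsSep f n γ ↑E ∧ E.card = m}

/-- Minimal cardinality of a subset of `Λ` that `(n,γ)`-spans `Λ`. -/
noncomputable def spanCard {X : Type*} (f : ℕ → X → X) (Λ : Set X) (n : ℕ)
    (γ : Set (X × X)) : ℕ :=
  sInf {m | ∃ F : Finset X, ↑F ⊆ Λ ∧ Spans f n γ ↑F Λ ∧ F.card = m}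


/-- Topological entropy of the nonautonomous system `f` on the set `Λ`, defined via
separated sets; by antitonicity in the entourage, the supremum over all entourages agrees
with the limit along the net of symmetric open entourages used in the paper. -/
noncomputable def entropy {X : Type*} [UniformSpace X] (f : ℕ → X → X) (Λ : Set X) : EReal :=
  ⨆ γ ∈ 𝓤 X, atTop.limsup fun n : ℕ =>
    ((Real.log (sepCard f Λ n γ) / n : ℝ) : EReal)

/-
An `(n,δ)`-separated set `E ⊆ X` of maximal size is also `(n,δ)`-spanning, so `E^k` spans `X^k`
for the product entourage; if `Γ` contains the product entourage of `δ ○ δ⁻¹`, a counting argument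
bounds every `(n,Γ)`-separated subset of `X^k` by `|E|^k`. Conversely `E^k` is itself separated
for the product entourage. Hence the maximal separated cardinalities of `f^{(k)}` and the `k`-th
powers of those of `f` bound each other up to a change of entourage, and taking `log (·) / n`,
`limsup` and the supremum over entourages gives the factor `k`.
-/

def piSys {X : Type*} (f : ℕ → X → X) (ι : Type*) : ℕ → (ι → X) → ι → X :=
  fun n x i => f n (x i)

def piEntourage {X : Type*} (ι : Type*) (γ : Set (X × X)) : Set ((ι → X) × (ι → X)) :=
  {p | ∀ i, (p.1 i, p.2 i) ∈ γ}

section Combinatorics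

variable {X ι : Type*} {f : ℕ → X → X} {n : ℕ}

lemma itr_piSys (f : ℕ → X → X) (a m : ℕ) (x : ι → X) :
    itr (piSys f ι) a m x = fun i => itr f a m (x i) := by
  induction m with
  | zero => rfl
  | succ m ih => simp only [itr, ih]; rfl

lemma IsSep.card_le_card_of_spans {η δ : Set (X × X)}
    (hcomp : ∀ x y z : X, (x, z) ∈ δ → (y, z) ∈ δ → (x, y) ∈ η)
    {E F : Finset X} (hE : IsSep f n η E) (hF : Spans f n δ F univ) :
    E.card ≤ F.card := by
  choose s hsF hsδ using fun x => hF x (mem_univ x)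
  refine Finset.card_le_card_of_injOn s (fun x _ => hsF x) fun x hx y hy hxy => ?_
  by_contra hne
  obtain ⟨j, hj, hxy_sep⟩ := hE x hx y hy hne
  exact hxy_sep (hcomp _ _ _ (hsδ x j hj) (hxy ▸ hsδ y j hj))

lemma sepCard_le_card_of_spans {η δ : Set (X × X)}
    (hcomp : ∀ x y z : X, (x, z) ∈ δ → (y, z) ∈ δ → (x, y) ∈ η)
    {F : Finset X} (hF : Spans f n δ F univ) : sepCard f univ n η ≤ F.card :=
  csSup_le ⟨0, ∅, by simp, by simp [IsSep], rfl⟩ fun _ ⟨_, _, hE, hcard⟩ =>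
    hcard ▸ hE.card_le_card_of_spans hcomp hF

lemma IsSep.insert {δ : Set (X × X)} (hδ : SetRel.IsSymm δ) {E : Set X} (hE : IsSep f n δ E)
    {x : X} (hx : ∀ y ∈ E, ∃ j < n, (itr f 0 j x, itr f 0 j y) ∉ δ) :
    IsSep f n δ (insert x E) := by
  rintro a (rfl | ha) b (rfl | hb) hab
  · exact absurd rfl hab
  · exact hx b hb
  · obtain ⟨j, hj, hba⟩ := hx a ha
    exact ⟨j, hj, fun hab => hba (hδ.symm _ _ hab)⟩
  · exact hE a ha b hb hab

lemma IsSep.pi {γ : Set (X × X)} {E : Set X} (hE : IsSep f n γ E) :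
    IsSep (piSys f ι) n (piEntourage ι γ) (univ.pi fun _ => E) := by
  intro x hx y hy hxy
  obtain ⟨i, hi⟩ := Function.ne_iff.mp hxy
  obtain ⟨j, hj, hsep⟩ := hE (x i) (hx i trivial) (y i) (hy i trivial) hi
  refine ⟨j, hj, fun hmem => hsep ?_⟩
  simpa only [itr_piSys] using hmem i

lemma Spans.pi {δ : Set (X × X)} {F : Set X} (hF : Spans f n δ F univ) :
    Spans (piSys f ι) n (piEntourage ι δ) (univ.pi fun _ => F) univ := by
  intro x _
  choose y hyF hyδ using fun i => hF (x i) (mem_univ _)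
  refine ⟨y, fun i _ => hyF i, fun j hj i => ?_⟩
  simpa only [itr_piSys] using hyδ i j hj

end Combinatorics

lemma continuous_itr {X : Type*} [TopologicalSpace X] {f : ℕ → X → X}
    (hf : ∀ n, Continuous (f n)) (a m : ℕ) :
    Continuous (itr f a m) := by
  induction m with
  | zero => exact continuous_id
  | succ m ih => exact (hf (a + m)).comp ih

section Uniform

variable {X ι : Type*} [UniformSpace X]

lemma hasBasis_uniformity_piEntourage [Finite ι] :
    (𝓤 (ι → X)).HasBasis (· ∈ 𝓤 X) (piEntourage ι) := by
  refine ⟨fun Γ => ⟨fun hΓ => ?_, fun ⟨γ, hγ, hγΓ⟩ => mem_of_superset ?_ hγΓ⟩⟩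
  · rw [Pi.uniformity] at hΓ
    obtain ⟨t, ht, rfl⟩ := (mem_iInf_of_finite Γ).mp hΓ
    choose γ hγ hγt using fun i => mem_comap.mp (ht i)
    exact ⟨⋂ i, γ i, iInter_mem.mpr hγ, fun p hp =>
      mem_iInter.mpr fun i => hγt i (mem_iInter.mp (hp i) i)⟩
  · have : piEntourage ι γ = ⋂ i, (fun p : (ι → X) × (ι → X) => (p.1 i, p.2 i)) ⁻¹' γ := by
      ext; simp [piEntourage]
    rw [this, Pi.uniformity]
    exact iInter_mem.mpr fun i => mem_iInf_of_mem i (preimage_mem_comap hγ)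

variable [CompactSpace X] {f : ℕ → X → X}

lemma exists_finset_spans_univ (hf : ∀ n, Continuous (f n)) (n : ℕ) {γ : Set (X × X)}
    (hγ : γ ∈ 𝓤 X) :
    ∃ F : Finset X, Spans f n γ (F : Set X) univ := by
  obtain ⟨γ', ⟨hγ', hγ'_open⟩, hγ'γ⟩ := uniformity_hasBasis_open.mem_iff.mp hγ
  let U : X → Set X := fun c => ⋂ j : Fin n, (fun x => (itr f 0 j x, itr f 0 j c)) ⁻¹' γ'
  have hU : ∀ c, IsOpen (U c) := fun c => isOpen_iInter_of_finite fun j =>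
    hγ'_open.preimage ((continuous_itr hf 0 j).prodMk continuous_const)
  have hcover : univ ⊆ ⋃ c, U c := fun x _ =>
    mem_iUnion.mpr ⟨x, mem_iInter.mpr fun _ => refl_mem_uniformity hγ'⟩
  obtain ⟨F, hF⟩ := isCompact_univ.elim_finite_subcover U hU hcover
  refine ⟨F, fun x _ => ?_⟩
  obtain ⟨c, hc, hxc⟩ := mem_iUnion₂.mp (hF (mem_univ x))
  exact ⟨c, hc, fun j hj => hγ'γ (mem_iInter.mp hxc ⟨j, hj⟩)⟩

lemma bddAbove_sepCards (hf : ∀ n, Continuous (f n)) (n : ℕ) {γ : Set (X × X)}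
    (hγ : γ ∈ 𝓤 X) :
    BddAbove {m | ∃ E : Finset X, ↑E ⊆ (univ : Set X) ∧ IsSep f n γ ↑E ∧ E.card = m} := by
  obtain ⟨δ, hδ, hδ_symm, hδγ⟩ := comp_symm_mem_uniformity_sets hγ
  obtain ⟨F, hF⟩ := exists_finset_spans_univ hf n hδ
  refine ⟨F.card, fun _ ⟨E, _, hE, hcard⟩ => hcard ▸ hE.card_le_card_of_spans ?_ hF⟩
  exact fun x y z hxz hyz => hδγ (SetRel.prodMk_mem_comp hxz (hδ_symm.symm _ _ hyz))

lemma card_le_sepCard (hf : ∀ n, Continuous (f n)) {n : ℕ} {γ : Set (X × X)} (hγ : γ ∈ 𝓤 X)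
    {E : Finset X} (hE : IsSep f n γ (E : Set X)) : E.card ≤ sepCard f univ n γ :=
  le_csSup (bddAbove_sepCards hf n hγ) ⟨E, subset_univ _, hE, rfl⟩

lemma exists_isSep_card_eq_sepCard (hf : ∀ n, Continuous (f n)) (n : ℕ) {γ : Set (X × X)}
    (hγ : γ ∈ 𝓤 X) :
    ∃ E : Finset X, IsSep f n γ (E : Set X) ∧ E.card = sepCard f univ n γ := by
  obtain ⟨E, -, hE, hcard⟩ :=
    Nat.sSup_mem (by exact ⟨0, ∅, by simp, by simp [IsSep], rfl⟩) (bddAbove_sepCards hf n hγ)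
  exact ⟨E, hE, hcard⟩

lemma exists_spans_card_eq_sepCard (hf : ∀ n, Continuous (f n)) (n : ℕ) {δ : Set (X × X)}
    (hδ : δ ∈ 𝓤 X) (hδ_symm : SetRel.IsSymm δ) :
    ∃ F : Finset X, Spans f n δ (F : Set X) univ ∧ F.card = sepCard f univ n δ := by
  classical
  obtain ⟨E, hE, hcard⟩ := exists_isSep_card_eq_sepCard hf n hδ
  refine ⟨E, fun x _ => ?_, hcard⟩
  by_contra! hx
  have hxE : x ∉ E := by
    intro hxE
    obtain ⟨_, _, hxx⟩ := hx x hxE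
    exact hxx (refl_mem_uniformity hδ)
  have hsep : IsSep f n δ ↑(insert x E) := by
    rw [Finset.coe_insert]
    exact hE.insert hδ_symm hx
  have := card_le_sepCard hf hδ hsep
  rw [Finset.card_insert_of_notMem hxE, hcard] at this
  exact Nat.not_succ_le_self _ this

variable [Fintype ι]

lemma sepCard_piSys_le (hf : ∀ n, Continuous (f n)) {Γ : Set ((ι → X) × (ι → X))}
    (hΓ : Γ ∈ 𝓤 (ι → X)) :
    ∃ δ ∈ 𝓤 X, ∀ n, sepCard (piSys f ι) univ n Γ ≤ sepCard f univ n δ ^ Fintype.card ι := by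
  classical
  obtain ⟨γ, hγ, hγΓ⟩ := hasBasis_uniformity_piEntourage.mem_iff.mp hΓ
  obtain ⟨δ, hδ, hδ_symm, hδγ⟩ := comp_symm_mem_uniformity_sets hγ
  refine ⟨δ, hδ, fun n => ?_⟩
  obtain ⟨F, hF, hcard⟩ := exists_spans_card_eq_sepCard hf n hδ hδ_symm
  have hcomp : ∀ x y z : ι → X, (x, z) ∈ piEntourage ι δ → (y, z) ∈ piEntourage ι δ →
      (x, y) ∈ Γ := fun x y z hxz hyz =>
    hγΓ fun i => hδγ (SetRel.prodMk_mem_comp (hxz i) (hδ_symm.symm _ _ (hyz i)))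
  have hFk : Spans (piSys f ι) n (piEntourage ι δ) ↑(Fintype.piFinset fun _ : ι => F) univ := by
    rw [Fintype.coe_piFinset]
    exact hF.pi
  calc sepCard (piSys f ι) univ n Γ ≤ (Fintype.piFinset fun _ : ι => F).card :=
        sepCard_le_card_of_spans hcomp hFk
    _ = sepCard f univ n δ ^ Fintype.card ι := by simp [hcard]

lemma pow_le_sepCard_piSys (hf : ∀ n, Continuous (f n)) (n : ℕ) {γ : Set (X × X)}
    (hγ : γ ∈ 𝓤 X) :
    sepCard f univ n γ ^ Fintype.card ι ≤ sepCard (piSys f ι) univ n (piEntourage ι γ) := by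
  classical
  obtain ⟨E, hE, hcard⟩ := exists_isSep_card_eq_sepCard hf n hγ
  have hfk : ∀ n, Continuous (piSys f ι n) := fun n =>
    continuous_pi fun i => (hf n).comp (continuous_apply i)
  have hEk : IsSep (piSys f ι) n (piEntourage ι γ) ↑(Fintype.piFinset fun _ : ι => E) := by
    rw [Fintype.coe_piFinset]
    exact hE.pi
  calc sepCard f univ n γ ^ Fintype.card ι = (Fintype.piFinset fun _ : ι => E).card := by
        simp [hcard]
    _ ≤ _ := card_le_sepCard hfk (hasBasis_uniformity_piEntourage.mem_of_mem hγ) hEk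

end Uniform

section Growth

open Real

lemma log_natCast_monotone : Monotone fun n : ℕ => log n := by
  intro a b hab
  rcases a.eq_zero_or_pos with rfl | ha
  · simpa using log_natCast_nonneg b
  · exact log_le_log (Nat.cast_pos.mpr ha) (Nat.cast_le.mpr hab)

lemma limsup_log_div_mono {a b : ℕ → ℕ} (h : ∀ n, a n ≤ b n) :
    limsup (fun n : ℕ => ((log (a n) / n : ℝ) : EReal)) atTop ≤
      limsup (fun n : ℕ => ((log (b n) / n : ℝ) : EReal)) atTop :=
  limsup_le_limsup (.of_forall fun n => EReal.coe_le_coe_iff.mpr <|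
    div_le_div_of_nonneg_right (log_natCast_monotone (h n)) n.cast_nonneg)

lemma natCast_mul_limsup_log_div (k : ℕ) (b : ℕ → ℕ) :
    k * limsup (fun n : ℕ => ((log (b n) / n : ℝ) : EReal)) atTop =
      limsup (fun n : ℕ => ((log ↑(b n ^ k) / n : ℝ) : EReal)) atTop := by
  rw [← EReal.limsup_const_mul_of_nonneg_of_ne_top (Nat.cast_nonneg' k) (EReal.natCast_ne_top k)]
  simp only [Nat.cast_pow, log_pow, mul_div_assoc, EReal.coe_mul, EReal.coe_natCast]

end Growth

lemma EReal.mul_iSup_of_pos {ι : Sort*} {c : EReal} (hc : 0 < c) (hc_top : c ≠ ⊤)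
    (u : ι → EReal) : c * ⨆ i, u i = ⨆ i, c * u i := by
  refine Monotone.map_iSup_of_continuousAt (f := (c * ·)) ?_
    (fun _ _ h => mul_le_mul_of_nonneg_left h hc.le) (EReal.mul_bot_of_pos hc)
  exact (EReal.continuousAt_mul (.inl hc.ne') (.inl hc.ne') (.inl hc.ne_bot) (.inl hc_top)).comp
    (continuous_const.prodMk continuous_id).continuousAt

theorem entropy_piSys {X ι : Type*} [UniformSpace X] [CompactSpace X] [Fintype ι] [Nonempty ι]
    {f : ℕ → X → X} (hf : ∀ n, Continuous (f n)) :
    entropy (piSys f ι) univ = Fintype.card ι * entropy f univ := by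
  have hcard : (0 : EReal) < Fintype.card ι := by exact_mod_cast Fintype.card_pos
  apply le_antisymm
  · refine iSup₂_le fun Γ hΓ => ?_
    obtain ⟨δ, hδ, hle⟩ := sepCard_piSys_le hf hΓ
    refine ((limsup_log_div_mono hle).trans_eq (natCast_mul_limsup_log_div _ _).symm).trans ?_
    exact mul_le_mul_of_nonneg_left (le_iSup₂_of_le δ hδ le_rfl) hcard.le
  · simp only [entropy, EReal.mul_iSup_of_pos hcard (EReal.natCast_ne_top _)]
    refine iSup₂_le fun γ hγ => le_iSup₂_of_le (piEntourage ι γ)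
      (hasBasis_uniformity_piEntourage.mem_of_mem hγ) ?_
    exact (natCast_mul_limsup_log_div _ _).trans_le
      (limsup_log_div_mono (pow_le_sepCard_piSys hf · hγ))

/-- The `k`-fold product system `f_{0,∞}^{(k)}` on `X^k` (with the product uniformity)
has entropy `k · h(f_{0,∞})`. -/
theorem entropy_pow_prod {X : Type*} [UniformSpace X] [CompactSpace X]
    (f : ℕ → X → X) (hf : ∀ n, Continuous (f n)) (k : ℕ) (hk : 1 ≤ k) :
    entropy (fun n (x : Fin k → X) (i : Fin k) => f n (x i)) Set.univ =
      (k : EReal) * entropy f Set.univ := by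
  have : Nonempty (Fin k) := ⟨⟨0, hk⟩⟩
  have h := entropy_piSys (ι := Fin k) hf
  rwa [Fintype.card_fin] at h
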